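/- arXiv:2304.05285 — 6 statements merged into one kernel-verified Lean document; each statement's English description precedes it below -/
import Mathlib

section
/- Let μ/ν be a skew shape of length at most n, let δ = (n-1, n-2, ..., 1, 0), and let h : [n] → [n] be the Hessenberg function defined by h(j) = max{ i ∈ [n] : μ_i - ν_j + j - i ≥ 0 }. For any permutation w ∈ S_n, the integer sequence μ + δ - w^{-1}(ν + δ) has no negative entries if and only if w(i) ≤ h(i) for all i ∈ [n]. -/
open Equiv

/-- `T i j` is the entry of a filling in row `i`, column `j` (0-based);
entries outside the diagram of `shape` are `0`.  Rows weakly increase,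
columns strictly increase. -/
def IsSSYT (shape : ℕ → ℕ) (T : ℕ → ℕ → ℕ) : Prop :=
  (∀ i j, j + 1 < shape i → T i j ≤ T i (j + 1)) ∧
  (∀ i j, j < shape (i + 1) → T i j < T (i + 1) j) ∧
  (∀ i j, shape i ≤ j → T i j = 0)

/-- The Kostka number: the number of semistandard Young tableaux of the given
shape in which the entry `m` appears exactly `c m` times. -/
noncomputable def kostka (shape : ℕ → ℕ) (c : ℕ → ℕ) : ℕ :=
  Set.ncard {T : ℕ → ℕ → ℕ | IsSSYT shape T ∧
    ∀ m : ℕ, {p : ℕ × ℕ | p.2 < shape p.1 ∧ T p.1 p.2 = m}.ncard = c m}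

open Classical in
/-- Kostka number for an integer content, with the convention that it is `0`
whenever the content has a negative entry. -/
noncomputable def kostkaZ (shape : ℕ → ℕ) (c : ℕ → ℤ) : ℕ :=
  if ∀ m, 0 ≤ c m then kostka shape (fun m => (c m).toNat) else 0

/-- The hook shape `(N - k, 1, ..., 1)` with `k` trailing rows of length 1. -/
def hookShape (N k : ℕ) : ℕ → ℕ :=
  fun i => if i = 0 then N - k else if i ≤ k then 1 else 0

/-- Extend a sequence indexed by `Fin n` to all of `ℕ` by zeros. -/
def extendSeq {n : ℕ} (a : Fin n → ℤ) : ℕ → ℤ :=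
  fun m => if h : m < n then a ⟨m, h⟩ else 0

/-- The staircase `δ = (n-1, n-2, ..., 1, 0)`. -/
def deltaSeq (n : ℕ) : Fin n → ℤ := fun i => (n : ℤ) - 1 - (i.val : ℤ)

/-- The sequence `μ + δ - w(ν + δ)`, where a permutation acts on sequences by
shuffling: `(w(a))_i = a_{w⁻¹(i)}`. -/
def hatSeq {n : ℕ} (μ ν : Fin n → ℕ) (w : Perm (Fin n)) : Fin n → ℤ :=
  fun i => ((μ i : ℤ) + deltaSeq n i) - ((ν (w⁻¹ i) : ℤ) + deltaSeq n (w⁻¹ i))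

/-- `h` is the Hessenberg function of the skew shape `μ/ν`:
`h j = max { i | μ i - ν j + j - i ≥ 0 }`. -/
def IsHessOf {n : ℕ} (μ ν : Fin n → ℕ) (h : Fin n → Fin n) : Prop :=
  ∀ j : Fin n, (ν j + ((h j : ℕ)) ≤ μ (h j) + (j : ℕ)) ∧
    ∀ i : Fin n, ν j + (i : ℕ) ≤ μ i + (j : ℕ) → i ≤ h j

/-- The indicator `ĥ(w)` of the condition `w(i) ≤ h(i)` for all `i`. -/
def hhat {n : ℕ} (h : Fin n → Fin n) (w : Perm (Fin n)) : ℕ :=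
  if ∀ i, w i ≤ h i then 1 else 0

/-- The modified Hessenberg function `h^J`: `h^J(i) = h(i) - 1` when `i ∈ J` and
`μ_{h(i)} - ν_i + i - h(i) = 0`, and `h^J(i) = h(i)` otherwise. -/
def hJfun {n : ℕ} (μ ν : Fin n → ℕ) (h : Fin n → Fin n) (J : Finset (Fin n)) :
    Fin n → Fin n :=
  fun i => if i ∈ J ∧ μ (h i) + (i : ℕ) = ν i + ((h i : ℕ)) then
      ⟨(h i : ℕ) - 1, Nat.lt_of_le_of_lt (Nat.sub_le _ _) (h i).isLt⟩
    else h i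

open Classical in
/-- The conjugacy class of `w` in the symmetric group, as a finset. -/
noncomputable def conjClass {n : ℕ} (w : Perm (Fin n)) : Finset (Perm (Fin n)) :=
  Finset.univ.filter (fun v => IsConj w v)

/-- The Stanley–Stembridge character
`Γ_h(w) = (n! / |C(w)|) · Σ_{w' ∈ C(w)} ĥ(w')`. -/
noncomputable def GammaH {n : ℕ} (h : Fin n → Fin n) (w : Perm (Fin n)) : ℚ :=
  ((n.factorial : ℚ) / ((conjClass w).card : ℚ)) * ∑ v ∈ conjClass w, (hhat h v : ℚ)

/-- The immanant character
`Γ^θ_{μ/ν}(w) = (n! / |C(w)|) · Σ_{w' ∈ C(w)} K_{θ, μ+δ-w'(ν+δ)}`. -/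
noncomputable def GammaTheta {n : ℕ} (shape : ℕ → ℕ) (μ ν : Fin n → ℕ)
    (w : Perm (Fin n)) : ℚ :=
  ((n.factorial : ℚ) / ((conjClass w).card : ℚ)) *
    ∑ v ∈ conjClass w, (kostkaZ shape (extendSeq (hatSeq μ ν v)) : ℚ)

lemma staircase_sub_nonneg_iff {n : ℕ} (μ ν : Fin n → ℕ) (i j : Fin n) :
    0 ≤ ((μ i : ℤ) + deltaSeq n i) - ((ν j : ℤ) + deltaSeq n j) ↔
      ν j + (i : ℕ) ≤ μ i + (j : ℕ) := by
  simp only [deltaSeq]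
  omega

/-- As `μ` is antitone, the rows `i` with `μ i - ν j + j - i ≥ 0` form an initial segment,
whose last element is `h j`. -/
lemma IsHessOf.le_iff {n : ℕ} {μ ν : Fin n → ℕ} {h : Fin n → Fin n}
    (hh : IsHessOf μ ν h) (hμ : Antitone μ) (i j : Fin n) :
    ν j + (i : ℕ) ≤ μ i + (j : ℕ) ↔ i ≤ h j := by
  refine ⟨(hh j).2 i, fun hij => ?_⟩
  have hμij : μ (h j) ≤ μ i := hμ hij
  have hij' : (i : ℕ) ≤ h j := hij
  have hhj := (hh j).1
  omega

theorem stmt1_general {n : ℕ} (μ ν : Fin n → ℕ) (hμ : Antitone μ)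
    (h : Fin n → Fin n) (hh : IsHessOf μ ν h)
    (w : Perm (Fin n)) :
    (∀ i : Fin n,
        0 ≤ ((μ i : ℤ) + deltaSeq n i) - ((ν (w⁻¹ i) : ℤ) + deltaSeq n (w⁻¹ i)))
      ↔ (∀ i, w i ≤ h i) := by
  rw [← w.forall_congr_right]
  simp only [Perm.inv_def, symm_apply_apply, staircase_sub_nonneg_iff, hh.le_iff hμ]

/-- Lemma 2.8: the sequence `μ + δ - w⁻¹(ν + δ)` (whose `i`-th
entry is `(μ+δ)_i - (ν+δ)_{w⁻¹(i)}`) has no negative entries if and only if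
`w(i) ≤ h(i)` for all `i`, where `h` is the Hessenberg function of `μ/ν`. -/
theorem stmt1 {n : ℕ} (μ ν : Fin n → ℕ) (hμ : Antitone μ) (hν : Antitone ν)
    (hle : ∀ i, ν i ≤ μ i) (h : Fin n → Fin n) (hh : IsHessOf μ ν h)
    (w : Perm (Fin n)) :
    (∀ i : Fin n,
        0 ≤ ((μ i : ℤ) + deltaSeq n i) - ((ν (w⁻¹ i) : ℤ) + deltaSeq n (w⁻¹ i)))
      ↔ (∀ i, w i ≤ h i) :=
  stmt1_general μ ν hμ h hh w
end

section
/- Let μ/ν be a skew shape (padded to length n) and suppose i ∈ [n] satisfies μ_{i+1} ≤ ν_i. If w ∈ S_n is such that the sequence μ + δ - w(ν + δ) has all entries non-negative, where δ = (n-1, ..., 1, 0), then w preserves the set {1, ..., i}, i.e. w lies in the Young subgroup S_{{1,...,i}} × S_{{i+1,...,n}}. -/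
open Equiv

/-- Lemma A.1: if `μ_{i+1} ≤ ν_i` and `μ + δ - w(ν + δ)` has
no negative entry, then `w` preserves `{0, ..., i}`, i.e. it lies in the
corresponding Young subgroup. -/
theorem stmt2 {n : ℕ} (μ ν : Fin n → ℕ) (hμ : Antitone μ) (hν : Antitone ν)
    (hle : ∀ j, ν j ≤ μ j) (i : Fin n)
    (hi : ∀ j : Fin n, (j : ℕ) = (i : ℕ) + 1 → μ j ≤ ν i)
    (w : Perm (Fin n)) (hw : ∀ j, 0 ≤ hatSeq μ ν w j) :
    ∀ j : Fin n, j ≤ i → w j ≤ i := by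
  intro j hj
  by_contra hc
  push_neg at hc
  set k := w j with hk
  have hik : (i : ℕ) < (k : ℕ) := hc
  have hkn : (i : ℕ) + 1 < n := lt_of_le_of_lt hik k.isLt
  set m : Fin n := ⟨(i : ℕ) + 1, hkn⟩ with hm
  have h1 : μ k ≤ μ m := hμ (by simpa [Fin.le_def, hm] using hik)
  have h2 : μ m ≤ ν i := hi m rfl
  have h3 : ν i ≤ ν j := hν hj
  have hμk : μ k ≤ ν j := le_trans h1 (le_trans h2 h3)
  have hw' := hw k
  have hinv : w⁻¹ k = j := by simp [hk]
  rw [hatSeq, hinv] at hw'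
  unfold deltaSeq at hw'
  have hjk : (j : ℕ) ≤ (i : ℕ) := hj
  have : ((ν j : ℤ)) + ((n:ℤ) - 1 - (j:ℕ)) ≤ (μ k : ℤ) + ((n:ℤ) - 1 - (k:ℕ)) := by
    linarith
  have : (k : ℕ) ≤ (j : ℕ) := by
    have := hμk
    push_cast at *
    omega
  omega
end

section
/- Let h : [n] → [n] be a Hessenberg function arising from a skew shape μ/ν with no empty rows (i.e. ν_i < μ_i for all i ≤ n), defined by h(j) = max{ i ∈ [n] : μ_i - ν_j + j - i ≥ 0 }. For any subset J ⊆ [n-1], define h^J : [n] → [n] by h^J(i) = h(i) - 1 if i ∈ J and μ_{h(i)} - ν_i + i - h(i) = 0, and h^J(i) = h(i) otherwise. Then h^J is again a Hessenberg function: it is weakly increasing and satisfies h^J(i) ≥ i for all i ∈ [n]. -/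
open Equiv

/-- for a skew shape with no empty rows and any `J ⊆ [n-1]`,
the function `h^J` is again a Hessenberg function. -/
theorem stmt3 {n : ℕ} (μ ν : Fin n → ℕ) (hμ : Antitone μ) (hν : Antitone ν)
    (hlt : ∀ i, ν i < μ i) (h : Fin n → Fin n) (hh : IsHessOf μ ν h)
    (J : Finset (Fin n)) (hJ : ∀ i ∈ J, (i : ℕ) < n - 1) :
    Monotone (hJfun μ ν h J) ∧ ∀ i, i ≤ hJfun μ ν h J i := by
  have hmono : ∀ j j' : Fin n, j ≤ j' → ((h j : ℕ)) ≤ ((h j' : ℕ)) := by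
    intro j j' hle
    have h1 := (hh j).1
    have hν' : ν j' ≤ ν j := hν hle
    have hjj : (j : ℕ) ≤ (j' : ℕ) := hle
    exact (hh j').2 (h j) (by omega)
  have hself : ∀ i : Fin n, (i : ℕ) ≤ ((h i : ℕ)) := fun i =>
    (hh i).2 i (by have := (hlt i).le; omega)
  have key : ∀ i i' : Fin n, (i : ℕ) < (i' : ℕ) →
      μ (h i') + (i' : ℕ) = ν i' + ((h i' : ℕ)) → ((h i : ℕ)) < ((h i' : ℕ)) := by
    intro i i' hlt' heq
    have hm := hmono i i' (le_of_lt hlt')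
    rcases lt_or_eq_of_le hm with h' | h'
    · exact h'
    · exfalso
      have h1 := (hh i).1
      have hfe : h i = h i' := Fin.ext h'
      rw [hfe] at h1
      have hν' : ν i' ≤ ν i := hν (le_of_lt hlt')
      omega
  constructor
  · intro i i' hle
    have hm := hmono i i' hle
    have hii : (i : ℕ) ≤ (i' : ℕ) := hle
    simp only [hJfun]
    split_ifs with hc hc' hc'
    · simp only [Fin.mk_le_mk]; omega
    · simp only [Fin.le_def]; omega
    · rcases eq_or_lt_of_le hii with he | hlt'
      · exfalso; exact hc (by rw [Fin.ext he]; exact hc')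
      · have := key i i' hlt' hc'.2
        simp only [Fin.le_def]; omega
    · exact hm
  · intro i
    simp only [hJfun]
    split_ifs with hc
    · by_cases he : ((h i : ℕ)) = (i : ℕ)
      · exfalso
        have h2 := hc.2
        rw [show h i = i from Fin.ext he] at h2
        have := hlt i
        omega
      · have := hself i
        simp only [Fin.le_def]; omega
    · exact hself i
end

section
/- Let h be the Hessenberg function of a skew shape μ/ν with no empty rows, and for J ⊆ [n-1] let h^J be as defined (h^J(i) = h(i)-1 if i ∈ J and μ_{h(i)} - ν_i + i - h(i) = 0, else h(i)). Fix w ∈ S_n with w(i) ≤ h(i) for all i, and let Z_w = { i ∈ [n] : μ_{w(i)} - ν_i + i - w(i) = 0 }. Then for a size-k subset J ⊆ [n-1], the indicator ĥ^J(w) = 1 (i.e. w(i) ≤ h^J(i) for all i) if and only if J ∩ Z_w = ∅. -/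
open Equiv

/-- for `w` with `w(i) ≤ h(i)` for all `i` and a size-`k`
subset `J ⊆ [n-1]`, the indicator `ĥ^J(w) = 1` iff `J ∩ Z_w = ∅`, where
`Z_w = { i | μ_{w(i)} - ν_i + i - w(i) = 0 }`. -/
theorem stmt4 {n k : ℕ} (μ ν : Fin n → ℕ) (hμ : Antitone μ) (hν : Antitone ν)
    (hlt : ∀ i, ν i < μ i) (h : Fin n → Fin n) (hh : IsHessOf μ ν h)
    (w : Perm (Fin n)) (hw : ∀ i, w i ≤ h i)
    (J : Finset (Fin n)) (hJ : ∀ i ∈ J, (i : ℕ) < n - 1) (hJcard : J.card = k) :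
    hhat (hJfun μ ν h J) w = 1 ↔
      J ∩ (Finset.univ.filter
        (fun i : Fin n => μ (w i) + (i : ℕ) = ν i + ((w i : ℕ)))) = ∅ := by
  constructor
  · intro H
    rw [Finset.eq_empty_iff_forall_notMem]
    intro i hi
    simp only [Finset.mem_inter, Finset.mem_filter, Finset.mem_univ, true_and] at hi
    obtain ⟨hiJ, hiZ⟩ := hi
    unfold hhat at H
    split_ifs at H with Hall
    have hwi : (w i : ℕ) ≤ (h i : ℕ) := hw i
    have hwh : (w i : ℕ) = (h i : ℕ) := by
      by_contra hne
      have hlt' : (w i : ℕ) < (h i : ℕ) := lt_of_le_of_ne hwi hne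
      have hmono : μ (h i) ≤ μ (w i) := hμ (le_of_lt hlt')
      have h1 := (hh i).1
      omega
    have hweq : w i = h i := Fin.ext hwh
    have hcond : i ∈ J ∧ μ (h i) + (i : ℕ) = ν i + ((h i : ℕ)) :=
      ⟨hiJ, by rw [← hweq]; exact hiZ⟩
    have hHi := Hall i
    unfold hJfun at hHi
    rw [if_pos hcond] at hHi
    have hle : (w i : ℕ) ≤ (h i : ℕ) - 1 := hHi
    have hpos : 0 < (h i : ℕ) := by
      by_contra hp
      have hw0 : (w i : ℕ) = 0 := by omega
      have h2 := hlt i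
      have h3 : μ i ≤ μ (w i) := hμ (show w i ≤ i from by
        rw [Fin.le_def, hw0]; exact Nat.zero_le _)
      omega
    omega
  · intro hempty
    unfold hhat
    rw [if_pos]
    intro i
    unfold hJfun
    split_ifs with hc
    · have hiZ : ¬ (μ (w i) + (i : ℕ) = ν i + ((w i : ℕ))) := by
        intro heq
        have hmem : i ∈ J ∩ (Finset.univ.filter
            (fun i : Fin n => μ (w i) + (i : ℕ) = ν i + ((w i : ℕ)))) :=
          Finset.mem_inter.mpr ⟨hc.1, by simp [heq]⟩
        rw [hempty] at hmem
        exact absurd hmem (Finset.notMem_empty i)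
      have hwi : (w i : ℕ) ≤ (h i : ℕ) := hw i
      have hlt' : (w i : ℕ) < (h i : ℕ) := by
        rcases lt_or_eq_of_le hwi with h1 | h1
        · exact h1
        · exfalso; apply hiZ
          have : w i = h i := Fin.ext h1
          rw [this]; exact hc.2
      show (w i : ℕ) ≤ (h i : ℕ) - 1
      omega
    · exact hw i
end

section
/- Let Z_w = { i ∈ [n] : μ_{w(i)} - ν_i + i - w(i) = 0 } for a permutation w with w(i) ≤ h(i) for all i, where μ/ν is a skew shape with no empty rows and h is its Hessenberg function. Then n ∉ Z_w, the content μ + δ - w(ν + δ) has exactly n - |Z_w| nonzero entries, all of them positive, and K_{θ, μ+δ-w(ν+δ)} = C(n - |Z_w| - 1, k) for the hook partition θ = (N-k,1,...,1). -/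
open Equiv

namespace HookAux

lemma count_getD (l : List ℕ) (m : ℕ) :
    ((Finset.range l.length).filter (fun j => l.getD j 0 = m)).card = l.count m := by
  induction l with
  | nil => simp
  | cons a t ih =>
    rw [List.length_cons, Finset.range_add_one', Finset.filter_insert]
    by_cases hm : a = m
    · rw [if_pos (by simpa using hm), Finset.card_insert_of_notMem (by simp),
        Finset.filter_map, Finset.card_map, List.count_cons, if_pos ?_, ← ih]
      · congr 1
      · simpa using hm
    · rw [if_neg (by simpa using hm), Finset.filter_map, Finset.card_map,
        List.count_cons, if_neg (by simpa using hm), ← ih]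
      congr 1

/-- the content multiset of `c` supported on `S` -/
def contentM (c : ℕ → ℕ) (S : Finset ℕ) : Multiset ℕ := ∑ m ∈ S, (c m) • ({m} : Multiset ℕ)

lemma count_contentM (c : ℕ → ℕ) (S : Finset ℕ) (m : ℕ) :
    (contentM c S).count m = if m ∈ S then c m else 0 := by
  rw [contentM, Multiset.count_sum']
  by_cases hm : m ∈ S
  · rw [if_pos hm, Finset.sum_eq_single m]
    · simp
    · intro b _ hb
      simp [Multiset.count_nsmul, Multiset.count_singleton, hb.symm]
    · exact fun h => absurd hm h
  · rw [if_neg hm, Finset.sum_eq_zero]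
    intro b hb
    have : m ≠ b := fun e => hm (e ▸ hb)
    simp [Multiset.count_nsmul, Multiset.count_singleton, this]

lemma mem_contentM {c : ℕ → ℕ} {S : Finset ℕ} {a : ℕ} (h : a ∈ contentM c S) : a ∈ S := by
  by_contra hm
  have := count_contentM c S a
  rw [if_neg hm] at this
  exact (Multiset.count_eq_zero.1 this) h

lemma card_contentM (c : ℕ → ℕ) (S : Finset ℕ) :
    Multiset.card (contentM c S) = ∑ m ∈ S, c m := by
  rw [← Multiset.sum_count_eq_card (fun a ha => mem_contentM ha)]
  refine Finset.sum_congr rfl fun m hm => ?_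
  rw [count_contentM, if_pos hm]

/-- row word of the tableau associated to `U` -/
def rowL (c : ℕ → ℕ) (S : Finset ℕ) (U : Finset ℕ) : List ℕ :=
  Multiset.sort (contentM c S - U.val) (· ≤ ·)

def colL (U : Finset ℕ) : List ℕ := Finset.sort U (· ≤ ·)

def tabF (c : ℕ → ℕ) (S : Finset ℕ) (k : ℕ) (U : Finset ℕ) : ℕ → ℕ → ℕ :=
  fun i j => if i = 0 then (rowL c S U).getD j 0
    else if i ≤ k ∧ j = 0 then (colL U).getD (i-1) 0 else 0

section facts

variable {c : ℕ → ℕ} {S : Finset ℕ} {N k m0 : ℕ} {U : Finset ℕ}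

lemma count_U_val (m : ℕ) :
    U.val.count m = if m ∈ U then 1 else 0 := by
  by_cases hm : m ∈ U
  · rw [if_pos hm, Multiset.count_eq_one_of_mem U.nodup hm]
  · rw [if_neg hm, Multiset.count_eq_zero_of_notMem hm]

lemma val_le_contentM (hc : ∀ m, c m ≠ 0 ↔ m ∈ S) (hUS : U ⊆ S) :
    U.val ≤ contentM c S := by
  rw [Multiset.le_iff_count]
  intro a
  rw [count_contentM, count_U_val]
  by_cases ha : a ∈ U
  · have haS : a ∈ S := hUS ha
    have : c a ≠ 0 := (hc a).2 haS
    rw [if_pos ha, if_pos haS]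
    omega
  · simp [ha]

lemma count_rowL (hc : ∀ m, c m ≠ 0 ↔ m ∈ S) (m : ℕ) :
    (rowL c S U).count m = c m - (if m ∈ U then 1 else 0) := by
  rw [rowL, ← Multiset.coe_count, Multiset.sort_eq, Multiset.count_sub,
    count_contentM, count_U_val]
  by_cases hm : m ∈ S
  · rw [if_pos hm]
  · rw [if_neg hm]
    have : c m = 0 := by by_contra h; exact hm ((hc m).1 h)
    simp [this]

lemma length_rowL (hc : ∀ m, c m ≠ 0 ↔ m ∈ S) (hUS : U ⊆ S)
    (hsum : ∑ m ∈ S, c m = N) (hUc : U.card = k) :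
    (rowL c S U).length = N - k := by
  rw [rowL, Multiset.length_sort, Multiset.card_sub (val_le_contentM hc hUS),
    card_contentM, hsum]
  simp [hUc]

lemma length_colL : (colL U).length = U.card := Finset.length_sort _

lemma sorted_rowL : (rowL c S U).Pairwise (· ≤ ·) := Multiset.pairwise_sort _ _

lemma sorted_colL : (colL U).Pairwise (· < ·) := List.sortedLT_iff_pairwise.1 (Finset.sortedLT_sort U)

lemma mem_rowL {a : ℕ} (h : a ∈ rowL c S U) : a ∈ S := by
  rw [rowL, Multiset.mem_sort] at h
  exact mem_contentM (Multiset.mem_of_le (Multiset.sub_le_self _ _) h)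

lemma mem_colL {a : ℕ} : a ∈ colL U ↔ a ∈ U := Finset.mem_sort _

/-- the head of a sorted list is at most any member -/
lemma getD_zero_le_of_mem {l : List ℕ} (hs : l.Pairwise (· ≤ ·)) {a : ℕ} (ha : a ∈ l) :
    l.getD 0 0 ≤ a := by
  obtain ⟨⟨i, hi⟩, rfl⟩ := List.mem_iff_get.1 ha
  have h0 : 0 < l.length := Nat.lt_of_le_of_lt (Nat.zero_le _) hi
  rw [List.getD_eq_getElem l 0 h0]
  rcases Nat.eq_zero_or_pos i with rfl | hpos
  · simp
  · exact hs.rel_get_of_lt (a := ⟨0, h0⟩) (b := ⟨i, hi⟩) hpos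

lemma m0_mem_rowL (hc : ∀ m, c m ≠ 0 ↔ m ∈ S) (hm0 : m0 ∈ S)
    (hUS : U ⊆ S.erase m0) : m0 ∈ rowL c S U := by
  have h1 : (rowL c S U).count m0 = c m0 - 0 := by
    rw [count_rowL hc, if_neg (fun h => (Finset.mem_erase.1 (hUS h)).1 rfl)]
  have h2 : c m0 ≠ 0 := (hc m0).2 hm0
  have : 0 < (rowL c S U).count m0 := by omega
  exact List.count_pos_iff.mp this

end facts

end HookAux
namespace HookAux

section facts2

variable {c : ℕ → ℕ} {S : Finset ℕ} {N k m0 : ℕ} {U : Finset ℕ}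

lemma hookShape_zero' : hookShape N k 0 = N - k := if_pos rfl

lemma hookShape_one {i : ℕ} (h1 : i ≠ 0) (h2 : i ≤ k) : hookShape N k i = 1 := by
  simp only [hookShape]; rw [if_neg h1, if_pos h2]

lemma hookShape_zero_of_gt {i : ℕ} (h1 : i ≠ 0) (h2 : k < i) : hookShape N k i = 0 := by
  simp only [hookShape]; rw [if_neg h1, if_neg (by omega)]

lemma hookShape_pos_iff (hkN : k < N) (i : ℕ) :
    0 < hookShape N k i ↔ i ≤ k := by
  rcases Nat.eq_zero_or_pos i with rfl | hi
  · rw [hookShape_zero']; omega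
  · rcases le_or_gt i k with h | h
    · rw [hookShape_one (by omega) h]; omega
    · rw [hookShape_zero_of_gt (by omega) h]; omega

lemma tabF_isSSYT (hc : ∀ m, c m ≠ 0 ↔ m ∈ S) (hsum : ∑ m ∈ S, c m = N)
    (hkN : k < N) (hm0 : m0 ∈ S) (hmin : ∀ x ∈ S, m0 ≤ x)
    (hUS : U ⊆ S.erase m0) (hUc : U.card = k) :
    IsSSYT (hookShape N k) (tabF c S k U) := by
  have hUS' : U ⊆ S := fun x hx => Finset.mem_of_mem_erase (hUS hx)
  have hrl : (rowL c S U).length = N - k := length_rowL hc hUS' hsum hUc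
  have hcl : (colL U).length = k := by rw [length_colL, hUc]
  refine ⟨?_, ?_, ?_⟩
  · -- rows weakly increase
    intro i j hj
    rcases Nat.eq_zero_or_pos i with rfl | hi
    · rw [hookShape_zero'] at hj
      show (rowL c S U).getD j 0 ≤ (rowL c S U).getD (j+1) 0
      rw [List.getD_eq_getElem _ _ (by omega), List.getD_eq_getElem _ _ (by omega)]
      exact sorted_rowL.rel_get_of_lt (a := ⟨j, by omega⟩) (b := ⟨j+1, by omega⟩) (by simp)
    · exfalso
      have h1 : hookShape N k i ≤ 1 := by
        rcases le_or_gt i k with h | h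
        · rw [hookShape_one (by omega) h]
        · rw [hookShape_zero_of_gt (by omega) h]; omega
      omega
  · -- columns strictly increase
    intro i j hj
    have hik : i + 1 ≤ k := by
      by_contra hik
      have : hookShape N k (i+1) = 0 := hookShape_zero_of_gt (by omega) (by omega)
      omega
    have hj0 : j = 0 := by
      have : hookShape N k (i+1) = 1 := hookShape_one (by omega) hik
      omega
    subst hj0
    rcases Nat.eq_zero_or_pos i with rfl | hi
    · -- corner < first column entry
      show tabF c S k U 0 0 < tabF c S k U 1 0
      have h1 : tabF c S k U 1 0 = (colL U).getD 0 0 := by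
        simp only [tabF]; rw [if_neg (by omega), if_pos ⟨hik, trivial⟩]
      have h0 : tabF c S k U 0 0 = (rowL c S U).getD 0 0 := by unfold tabF; simp
      rw [h0, h1]
      have hcol_mem : (colL U).getD 0 0 ∈ U := by
        rw [← mem_colL (U := U)]
        rw [List.getD_eq_getElem (colL U) 0 (n := 0) (by omega)]
        exact List.getElem_mem _
      have h2 : (rowL c S U).getD 0 0 ≤ m0 :=
        getD_zero_le_of_mem sorted_rowL (m0_mem_rowL hc hm0 hUS)
      have h3 : m0 < (colL U).getD 0 0 := by
        have := hUS hcol_mem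
        rw [Finset.mem_erase] at this
        exact lt_of_le_of_ne (hmin _ this.2) (Ne.symm this.1)
      omega
    · show tabF c S k U i 0 < tabF c S k U (i+1) 0
      have h1 : tabF c S k U i 0 = (colL U).getD (i-1) 0 := by
        simp only [tabF]; rw [if_neg (by omega), if_pos ⟨by omega, trivial⟩]
      have h2 : tabF c S k U (i+1) 0 = (colL U).getD i 0 := by
        simp only [tabF]; rw [if_neg (by omega), if_pos ⟨hik, trivial⟩]
        norm_num
      rw [h1, h2, List.getD_eq_getElem (colL U) 0 (n := i-1) (by omega),
        List.getD_eq_getElem (colL U) 0 (n := i) (by omega)]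
      exact sorted_colL.rel_get_of_lt (a := ⟨i-1, by omega⟩) (b := ⟨i, by omega⟩) (by simp; omega)
  · -- zeros outside
    intro i j hj
    rcases Nat.eq_zero_or_pos i with rfl | hi
    · rw [hookShape_zero'] at hj
      show (rowL c S U).getD j 0 = 0
      exact List.getD_eq_default _ _ (by omega)

    · show (if i = 0 then _ else if i ≤ k ∧ j = 0 then (colL U).getD (i-1) 0 else 0) = 0
      rw [if_neg (by omega)]
      rcases le_or_gt i k with h | h
      · have := hookShape_one (N := N) (by omega : i ≠ 0) h
        rw [if_neg (by omega)]
      · rw [if_neg (by omega)]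

end facts2

end HookAux
namespace HookAux

section facts3

variable {c : ℕ → ℕ} {S : Finset ℕ} {N k m0 : ℕ} {U : Finset ℕ}

lemma hook_content_ncard (hkN : k < N) (T : ℕ → ℕ → ℕ) (m : ℕ) :
    {p : ℕ × ℕ | p.2 < hookShape N k p.1 ∧ T p.1 p.2 = m}.ncard
      = ((Finset.range (N-k)).filter (fun j => T 0 j = m)).card
        + ((Finset.range k).filter (fun i => T (i+1) 0 = m)).card := by
  classical
  have hset : {p : ℕ × ℕ | p.2 < hookShape N k p.1 ∧ T p.1 p.2 = m} =
      ↑(((Finset.range (N-k)).filter (fun j => T 0 j = m)).image (fun j => ((0:ℕ), j)) ∪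
        ((Finset.range k).filter (fun i => T (i+1) 0 = m)).image (fun i => (i+1, (0:ℕ)))) := by
    ext ⟨a, b⟩
    simp only [Set.mem_setOf_eq, Finset.coe_union, Set.mem_union, Finset.coe_image,
      Set.mem_image, Finset.mem_coe, Finset.mem_filter, Finset.mem_range, Prod.mk.injEq]
    constructor
    · rintro ⟨hb, hT⟩
      rcases Nat.eq_zero_or_pos a with rfl | ha
      · exact Or.inl ⟨b, ⟨by rwa [hookShape_zero'] at hb, hT⟩, rfl, rfl⟩
      · have hak : a ≤ k := (hookShape_pos_iff hkN a).1 (by omega)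
        have hsh : hookShape N k a = 1 := hookShape_one (by omega) hak
        have hb0 : b = 0 := by omega
        subst hb0
        refine Or.inr ⟨a - 1, ⟨by omega, ?_⟩, by omega, rfl⟩
        rw [(by omega : a - 1 + 1 = a)]; exact hT
    · rintro (⟨j, ⟨hj, hT⟩, h1, h2⟩ | ⟨i, ⟨hi, hT⟩, h1, h2⟩)
      · subst h1; subst h2
        exact ⟨by rwa [hookShape_zero'], hT⟩
      · subst h1; subst h2
        exact ⟨by rw [hookShape_one (by omega) (by omega)]; omega, hT⟩
  rw [hset, Set.ncard_coe_finset, Finset.card_union_of_disjoint, 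
    Finset.card_image_of_injective _ (fun x y hxy => by simpa using hxy),
    Finset.card_image_of_injective _ (fun x y hxy => by simpa using hxy)]
  simp only [Finset.disjoint_left, Finset.mem_image, Finset.mem_filter, Finset.mem_range]
  rintro p ⟨j, _, rfl⟩ ⟨i, _, hip⟩
  simp at hip

lemma count_colL (m : ℕ) : (colL U).count m = if m ∈ U then 1 else 0 := by
  unfold colL
  by_cases hm : m ∈ U
  · rw [if_pos hm, List.count_eq_one_of_mem (Finset.sort_nodup _ _)
      ((Finset.mem_sort _).2 hm)]
  · rw [if_neg hm, List.count_eq_zero_of_not_mem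
      (fun h => hm ((Finset.mem_sort _).1 h))]

lemma tabF_row_card (hc : ∀ m, c m ≠ 0 ↔ m ∈ S) (hUS : U ⊆ S)
    (hsum : ∑ m ∈ S, c m = N) (hUc : U.card = k) (m : ℕ) :
    ((Finset.range (N-k)).filter (fun j => tabF c S k U 0 j = m)).card
      = (rowL c S U).count m := by
  classical
  have h1 := count_getD (rowL c S U) m
  rw [length_rowL hc hUS hsum hUc] at h1
  rw [← h1]
  congr 1

lemma tabF_col_card (hUc : U.card = k) (m : ℕ) :
    ((Finset.range k).filter (fun i => tabF c S k U (i+1) 0 = m)).card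
      = if m ∈ U then 1 else 0 := by
  classical
  rw [← count_colL (U := U) m]
  have h1 := count_getD (colL U) m
  rw [length_colL, hUc] at h1
  rw [← h1]
  congr 1
  ext i
  simp only [Finset.mem_filter, Finset.mem_range]
  refine and_congr_right fun hi => ?_
  have h2 : tabF c S k U (i+1) 0 = (colL U).getD i 0 := by
    simp only [tabF]; rw [if_neg (by omega), if_pos ⟨by omega, trivial⟩]
    norm_num
  rw [h2]

lemma tabF_content (hc : ∀ m, c m ≠ 0 ↔ m ∈ S) (hsum : ∑ m ∈ S, c m = N)
    (hkN : k < N) (hm0 : m0 ∈ S) (hUS : U ⊆ S.erase m0) (hUc : U.card = k) (m : ℕ) :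
    {p : ℕ × ℕ | p.2 < hookShape N k p.1 ∧ tabF c S k U p.1 p.2 = m}.ncard = c m := by
  have hUS' : U ⊆ S := fun x hx => Finset.mem_of_mem_erase (hUS hx)
  rw [hook_content_ncard hkN, tabF_row_card hc hUS' hsum hUc,
    tabF_col_card hUc, count_rowL hc]
  by_cases hm : m ∈ U
  · have : c m ≠ 0 := (hc m).2 (hUS' hm)
    simp only [if_pos hm]
    omega
  · simp [hm]

lemma image_tabF_col (hUc : U.card = k) :
    (Finset.range k).image (fun i => tabF c S k U (i+1) 0) = U := by
  classical
  ext m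
  simp only [Finset.mem_image, Finset.mem_range]
  have hlen : (colL U).length = k := by rw [length_colL, hUc]
  constructor
  · rintro ⟨i, hi, rfl⟩
    have h2 : tabF c S k U (i+1) 0 = (colL U).getD i 0 := by
      simp only [tabF]; rw [if_neg (by omega), if_pos ⟨by omega, trivial⟩]
      norm_num
    rw [h2, List.getD_eq_getElem (colL U) 0 (n := i) (by omega)]
    exact mem_colL.1 (List.getElem_mem _)
  · intro hm
    obtain ⟨⟨i, hi⟩, hval⟩ := List.mem_iff_get.1 (mem_colL.2 hm)
    rw [hlen] at hi
    refine ⟨i, hi, ?_⟩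
    have h2 : tabF c S k U (i+1) 0 = (colL U).getD i 0 := by
      simp only [tabF]; rw [if_neg (by omega), if_pos ⟨by omega, trivial⟩]
      norm_num
    rw [h2, List.getD_eq_getElem (colL U) 0 (n := i) (by omega)]
    exact hval

end facts3

end HookAux
namespace HookAux

section facts4

variable {c : ℕ → ℕ} {S : Finset ℕ} {N k m0 : ℕ}

lemma valid_eq_tabF (hc : ∀ m, c m ≠ 0 ↔ m ∈ S) (hsum : ∑ m ∈ S, c m = N)
    (hkN : k < N) (hm0 : m0 ∈ S) (hmin : ∀ x ∈ S, m0 ≤ x)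
    {T : ℕ → ℕ → ℕ} (hT : IsSSYT (hookShape N k) T)
    (hcont : ∀ m : ℕ, {p : ℕ × ℕ | p.2 < hookShape N k p.1 ∧ T p.1 p.2 = m}.ncard = c m) :
    ∃ U : Finset ℕ, U ⊆ S.erase m0 ∧ U.card = k ∧ T = tabF c S k U := by
  classical
  set rowc : ℕ → ℕ := fun m => ((Finset.range (N-k)).filter (fun j => T 0 j = m)).card with hrowc
  set colc : ℕ → ℕ := fun m => ((Finset.range k).filter (fun i => T (i+1) 0 = m)).card with hcolc
  have hcont' : ∀ m, rowc m + colc m = c m := by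
    intro m
    rw [← hcont m, hook_content_ncard hkN]
  -- column strictly increasing
  have d1 : ∀ i, i + 1 ≤ k → T i 0 < T (i+1) 0 := by
    intro i hik
    exact hT.2.1 i 0 (by rw [hookShape_one (by omega) hik]; omega)
  have d2 : ∀ a b, a < b → b ≤ k → T a 0 < T b 0 := by
    intro a b
    induction b with
    | zero => omega
    | succ b ih =>
      intro hab hbk
      rcases Nat.lt_or_ge a b with h | h
      · exact (ih h (by omega)).trans (d1 b hbk)
      · have : a = b := by omega
        subst this
        exact d1 a hbk
  have d3 : ∀ a b, a ≤ b → b < N - k → T 0 a ≤ T 0 b := by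
    intro a b
    induction b with
    | zero => intro h _; rw [Nat.le_zero.1 h]
    | succ b ih =>
      intro hab hbk
      rcases Nat.lt_or_ge a (b+1) with h | h
      · exact (ih (by omega) (by omega)).trans
          (hT.1 0 b (by rw [hookShape_zero']; omega))
      · have : a = b + 1 := by omega
        subst this
        exact le_refl _
  -- entries lie in S
  have d4 : ∀ a b, b < hookShape N k a → T a b ∈ S := by
    intro a b hb
    have hcm := hcont' (T a b)
    apply (hc (T a b)).1
    rcases Nat.eq_zero_or_pos a with rfl | ha
    · rw [hookShape_zero'] at hb
      have : 0 < rowc (T 0 b) := by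
        rw [hrowc]
        exact Finset.card_pos.2 ⟨b, Finset.mem_filter.2 ⟨Finset.mem_range.2 hb, rfl⟩⟩
      omega
    · have hak : a ≤ k := (hookShape_pos_iff hkN a).1 (by omega)
      have hb0 : b = 0 := by
        rw [hookShape_one (by omega) hak] at hb; omega
      subst hb0
      have : 0 < colc (T a 0) := by
        rw [hcolc]
        refine Finset.card_pos.2 ⟨a - 1, Finset.mem_filter.2 ⟨Finset.mem_range.2 (by omega), ?_⟩⟩
        rw [(by omega : a - 1 + 1 = a)]
      omega
  have hNk : 0 < N - k := by omega
  -- the corner is the minimum m0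
  have d5 : T 0 0 = m0 := by
    have hle1 : m0 ≤ T 0 0 := hmin _ (d4 0 0 (by rw [hookShape_zero']; omega))
    have hle2 : T 0 0 ≤ m0 := by
      have hcm0 : 0 < rowc m0 + colc m0 := by
        rw [hcont' m0]
        have := (hc m0).2 hm0
        omega
      rcases Nat.lt_or_ge 0 (rowc m0) with h | h
      · obtain ⟨j, hj⟩ := Finset.card_pos.1 h
        rw [Finset.mem_filter, Finset.mem_range] at hj
        rw [← hj.2]
        exact d3 0 j (by omega) hj.1
      · have : 0 < colc m0 := by omega
        obtain ⟨i, hi⟩ := Finset.card_pos.1 this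
        rw [Finset.mem_filter, Finset.mem_range] at hi
        rw [← hi.2]
        exact le_of_lt (d2 0 (i+1) (by omega) (by omega))
    omega
  set UT : Finset ℕ := (Finset.range k).image (fun i => T (i+1) 0) with hUT
  have hinj : Set.InjOn (fun i => T (i+1) 0) ↑(Finset.range k) := by
    intro x hx y hy hxy
    rw [Finset.mem_coe, Finset.mem_range] at hx hy
    by_contra hne
    rcases Nat.lt_or_ge x y with h | h
    · exact absurd hxy (Nat.ne_of_lt (d2 (x+1) (y+1) (by omega) (by omega)))
    · exact absurd hxy.symm (Nat.ne_of_lt (d2 (y+1) (x+1) (by omega) (by omega)))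
  have d6 : UT.card = k := by
    rw [hUT, Finset.card_image_of_injOn hinj, Finset.card_range]
  have d7 : UT ⊆ S.erase m0 := by
    intro m hm
    rw [hUT, Finset.mem_image] at hm
    obtain ⟨i, hi, rfl⟩ := hm
    rw [Finset.mem_range] at hi
    refine Finset.mem_erase.2 ⟨?_, d4 (i+1) 0 (by rw [hookShape_one (by omega) (by omega)]; omega)⟩
    rw [← d5]
    exact Nat.ne_of_gt (d2 0 (i+1) (by omega) (by omega))
  have d8 : ∀ m, colc m = if m ∈ UT then 1 else 0 := by
    intro m
    by_cases hm : m ∈ UT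
    · rw [if_pos hm]
      rw [hUT, Finset.mem_image] at hm
      obtain ⟨i0, hi0, hval⟩ := hm
      have : (Finset.range k).filter (fun i => T (i+1) 0 = m) = {i0} := by
        ext i
        simp only [Finset.mem_filter, Finset.mem_range, Finset.mem_singleton]
        constructor
        · rintro ⟨hik, hTi⟩
          exact hinj (Finset.mem_coe.2 (Finset.mem_range.2 hik)) (Finset.mem_coe.2 hi0)
            (by show T (i+1) 0 = T (i0+1) 0; rw [hTi, hval])
        · rintro rfl
          exact ⟨Finset.mem_range.1 hi0, hval⟩
      rw [hcolc]
      simp only at this ⊢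
      rw [this, Finset.card_singleton]
    · rw [if_neg hm, hcolc]
      simp only
      rw [Finset.card_eq_zero, Finset.filter_eq_empty_iff]
      intro i hi hTi
      exact hm (hUT ▸ Finset.mem_image.2 ⟨i, hi, hTi⟩)
  have hUS' : UT ⊆ S := fun x hx => Finset.mem_of_mem_erase (d7 hx)
  -- the column list
  set CT : List ℕ := (List.range k).map (fun i => T (i+1) 0) with hCT
  have hCTlen : CT.length = k := by rw [hCT, List.length_map, List.length_range]
  have hCTget : ∀ i (hi : i < k), CT.getD i 0 = T (i+1) 0 := by
    intro i hi
    rw [hCT, List.getD_eq_getElem _ 0 (n := i)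
      (by rw [List.length_map, List.length_range]; omega)]
    simp
  have hCTsorted : CT.Pairwise (· ≤ ·) := by
    rw [hCT, List.pairwise_map]
    refine (List.pairwise_lt_range : (List.range k).Pairwise (· < ·)).imp_of_mem ?_
    intro a b ha hb hab
    rw [List.mem_range] at ha hb
    exact le_of_lt (d2 (a+1) (b+1) (by omega) (by omega))
  have hCTcount : ∀ m, CT.count m = colc m := by
    intro m
    have h1 := count_getD CT m
    rw [hCTlen] at h1
    rw [← h1, hcolc]
    congr 1
    ext i
    simp only [Finset.mem_filter, Finset.mem_range]
    refine and_congr_right fun hi => ?_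
    rw [hCTget i hi]
  have hCTeq : CT = colL UT := by
    refine List.Perm.eq_of_pairwise' hCTsorted
      (sorted_colL.imp le_of_lt) (List.perm_iff_count.2 fun m => ?_)
    rw [hCTcount, count_colL, d8]
  -- the row list
  set LT : List ℕ := (List.range (N-k)).map (T 0) with hLT
  have hLTlen : LT.length = N - k := by rw [hLT, List.length_map, List.length_range]
  have hLTget : ∀ j (hj : j < N - k), LT.getD j 0 = T 0 j := by
    intro j hj
    rw [hLT, List.getD_eq_getElem _ 0 (n := j)
      (by rw [List.length_map, List.length_range]; omega)]
    simp
  have hLTsorted : LT.Pairwise (· ≤ ·) := by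
    rw [hLT, List.pairwise_map]
    refine (List.pairwise_lt_range : (List.range (N-k)).Pairwise (· < ·)).imp_of_mem ?_
    intro a b ha hb hab
    rw [List.mem_range] at ha hb
    exact d3 a b (by omega) hb
  have hLTcount : ∀ m, LT.count m = rowc m := by
    intro m
    have h1 := count_getD LT m
    rw [hLTlen] at h1
    rw [← h1, hrowc]
    congr 1
    ext j
    simp only [Finset.mem_filter, Finset.mem_range]
    refine and_congr_right fun hj => ?_
    rw [hLTget j hj]
  have hLTeq : LT = rowL c S UT := by
    refine List.Perm.eq_of_pairwise' hLTsorted sorted_rowL (List.perm_iff_count.2 fun m => ?_)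
    rw [hLTcount, count_rowL hc, ← d8]
    have := hcont' m
    omega
  refine ⟨UT, d7, d6, ?_⟩
  funext a b
  rcases Nat.eq_zero_or_pos a with rfl | ha
  · show T 0 b = (rowL c S UT).getD b 0
    rcases Nat.lt_or_ge b (N-k) with hb | hb
    · rw [← hLTeq, hLTget b hb]
    · rw [hT.2.2 0 b (by rw [hookShape_zero']; omega), ← hLTeq,
        List.getD_eq_default _ _ (by omega)]
  · rcases le_or_gt a k with hak | hak
    · rcases Nat.eq_zero_or_pos b with rfl | hb
      · show T a 0 = tabF c S k UT a 0
        have h2 : tabF c S k UT a 0 = (colL UT).getD (a-1) 0 := by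
          simp only [tabF]; rw [if_neg (by omega), if_pos ⟨hak, trivial⟩]
        rw [h2, ← hCTeq, hCTget (a-1) (by omega), (by omega : a - 1 + 1 = a)]
      · have h1 : T a b = 0 := hT.2.2 a b (by rw [hookShape_one (by omega) hak]; omega)
        have h2 : tabF c S k UT a b = 0 := by
          simp only [tabF]; rw [if_neg (by omega), if_neg (by omega)]
        rw [h1, h2]
    · have h1 : T a b = 0 := hT.2.2 a b (by rw [hookShape_zero_of_gt (by omega) hak]; omega)
      have h2 : tabF c S k UT a b = 0 := by
        simp only [tabF]; rw [if_neg (by omega), if_neg (by omega)]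
      rw [h1, h2]

lemma kostka_hook (hc : ∀ m, c m ≠ 0 ↔ m ∈ S) (hsum : ∑ m ∈ S, c m = N)
    (hkN : k < N) :
    kostka (hookShape N k) c = (S.card - 1).choose k := by
  classical
  have hS : S.Nonempty := by
    rcases Finset.eq_empty_or_nonempty S with rfl | h
    · simp at hsum; omega
    · exact h
  set m0 := S.min' hS with hm0def
  have hm0 : m0 ∈ S := S.min'_mem hS
  have hmin : ∀ x ∈ S, m0 ≤ x := fun x hx => S.min'_le x hx
  have hEq : {T : ℕ → ℕ → ℕ | IsSSYT (hookShape N k) T ∧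
      ∀ m : ℕ, {p : ℕ × ℕ | p.2 < hookShape N k p.1 ∧ T p.1 p.2 = m}.ncard = c m}
      = (tabF c S k) '' ↑((S.erase m0).powersetCard k) := by
    ext T
    simp only [Set.mem_setOf_eq, Set.mem_image, Finset.mem_coe, Finset.mem_powersetCard]
    constructor
    · rintro ⟨h1, h2⟩
      obtain ⟨U, hU1, hU2, hU3⟩ := valid_eq_tabF hc hsum hkN hm0 hmin h1 h2
      exact ⟨U, ⟨hU1, hU2⟩, hU3.symm⟩
    · rintro ⟨U, ⟨hU1, hU2⟩, rfl⟩
      exact ⟨tabF_isSSYT hc hsum hkN hm0 hmin hU1 hU2,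
        fun m => tabF_content hc hsum hkN hm0 hU1 hU2 m⟩
  rw [kostka, hEq, Set.ncard_image_of_injOn ?_, Set.ncard_coe_finset,
    Finset.card_powersetCard, Finset.card_erase_of_mem hm0]
  intro U hU U' hU' hTT
  rw [Finset.mem_coe, Finset.mem_powersetCard] at hU hU'
  have h1 := image_tabF_col (c := c) (S := S) (hUc := hU.2)
  have h2 := image_tabF_col (c := c) (S := S) (hUc := hU'.2)
  rw [← h1, ← h2, hTT]

end facts4

end HookAux


/-- for `w` with `w(i) ≤ h(i)` for all `i` and
`Z_w = { i | μ_{w(i)} - ν_i + i - w(i) = 0 }`: the last index is not in `Z_w`,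
the content `μ + δ - w(ν + δ)` is non-negative with exactly `n - |Z_w|` nonzero
entries, and `K_{θ, μ+δ-w(ν+δ)} = C(n - |Z_w| - 1, k)` for the hook
`θ = (N-k,1,...,1)`. -/
theorem stmt6 {n N k : ℕ} (hn : 0 < n) (μ ν : Fin n → ℕ)
    (hμ : Antitone μ) (hν : Antitone ν)
    (hlt : ∀ i, ν i < μ i) (hN : N = ∑ i : Fin n, (μ i - ν i)) (hk : k < N)
    (h : Fin n → Fin n) (hh : IsHessOf μ ν h)
    (w : Perm (Fin n)) (hw : ∀ i, w i ≤ h i)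
    (Zw : Finset (Fin n))
    (hZw : Zw = Finset.univ.filter
        (fun i : Fin n => μ (w i) + (i : ℕ) = ν i + ((w i : ℕ)))) :
    (⟨n - 1, by omega⟩ : Fin n) ∉ Zw ∧
    (∀ i, 0 ≤ hatSeq μ ν w i) ∧
    (Finset.univ.filter (fun i : Fin n => hatSeq μ ν w i ≠ 0)).card = n - Zw.card ∧
    kostkaZ (hookShape N k) (extendSeq (hatSeq μ ν w)) =
      (n - Zw.card - 1).choose k := by
  classical
  -- the key inequality
  have key : ∀ j : Fin n, ν j + ((w j : ℕ)) ≤ μ (w j) + (j : ℕ) := by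
    intro j
    have h1 := (hh j).1
    have h2 : μ (h j) ≤ μ (w j) := hμ (hw j)
    have h3 : (w j : ℕ) ≤ ((h j : ℕ)) := hw j
    omega
  -- part 1
  have part1 : (⟨n - 1, by omega⟩ : Fin n) ∉ Zw := by
    rw [hZw, Finset.mem_filter]
    rintro ⟨-, heq⟩
    set i0 : Fin n := ⟨n - 1, by omega⟩
    have hle : w i0 ≤ i0 := by
      rw [Fin.le_def]
      have := (w i0).isLt
      simp only [i0]
      omega
    have h1 : μ i0 ≤ μ (w i0) := hμ hle
    have h2 := hlt i0
    have h3 : (w i0 : ℕ) ≤ (i0 : ℕ) := hle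
    omega
  -- hatSeq value formula
  have hval : ∀ j : Fin n, hatSeq μ ν w (w j)
      = ((μ (w j) : ℤ) + (j : ℕ)) - ((ν j : ℤ) + ((w j : ℕ))) := by
    intro j
    unfold hatSeq deltaSeq
    rw [show w⁻¹ (w j) = j from Perm.inv_eq_iff_eq.mpr rfl]
    have hj := j.isLt
    have hwj := (w j).isLt
    push_cast
    omega
  -- part 2
  have part2 : ∀ i, 0 ≤ hatSeq μ ν w i := by
    intro i
    have := hval (w⁻¹ i)
    rw [show w (w⁻¹ i) = i from (eq_symm_apply w).mp rfl] at this
    rw [this]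
    have := key (w⁻¹ i)
    rw [show w (w⁻¹ i) = i from (eq_symm_apply w).mp rfl] at this
    push_cast
    omega
  -- zero iff in Zw (via w)
  have hzero : ∀ j : Fin n, hatSeq μ ν w (w j) = 0 ↔ j ∈ Zw := by
    intro j
    rw [hval j, hZw, Finset.mem_filter]
    constructor
    · intro he
      refine ⟨Finset.mem_univ _, ?_⟩
      have := key j
      omega
    · rintro ⟨-, he⟩
      omega
  -- part 3
  have hmap : Finset.univ.filter (fun i : Fin n => hatSeq μ ν w i = 0)
      = Zw.map ⟨w, w.injective⟩ := by
    ext i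
    simp only [Finset.mem_filter, Finset.mem_univ, true_and, Finset.mem_map,
      Function.Embedding.coeFn_mk]
    constructor
    · intro hi
      refine ⟨w⁻¹ i, ?_, (eq_symm_apply w).mp rfl⟩
      rw [← hzero (w⁻¹ i), show w (w⁻¹ i) = i from (eq_symm_apply w).mp rfl]
      exact hi
    · rintro ⟨j, hj, rfl⟩
      exact (hzero j).2 hj
  have part3 : (Finset.univ.filter (fun i : Fin n => hatSeq μ ν w i ≠ 0)).card
      = n - Zw.card := by
    have hsplit := Finset.card_filter_add_card_filter_not
      (s := (Finset.univ : Finset (Fin n))) (p := fun i => hatSeq μ ν w i = 0)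
    rw [Finset.card_univ, Fintype.card_fin, hmap, Finset.card_map] at hsplit
    have heq : (Finset.univ.filter (fun i : Fin n => ¬ hatSeq μ ν w i = 0))
        = (Finset.univ.filter (fun i : Fin n => hatSeq μ ν w i ≠ 0)) := rfl
    rw [heq] at hsplit
    omega
  refine ⟨part1, part2, part3, ?_⟩
  -- part 4
  have hnn : ∀ m, 0 ≤ extendSeq (hatSeq μ ν w) m := by
    intro m
    unfold extendSeq
    split
    · exact part2 _
    · exact le_refl 0
  rw [kostkaZ, if_pos hnn]
  set c : ℕ → ℕ := fun m => (extendSeq (hatSeq μ ν w) m).toNat with hc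
  set F : Finset (Fin n) := Finset.univ.filter (fun i : Fin n => hatSeq μ ν w i ≠ 0) with hF
  set S : Finset ℕ := F.image (fun i : Fin n => (i : ℕ)) with hS
  have hcS : ∀ m, c m ≠ 0 ↔ m ∈ S := by
    intro m
    rw [hS, Finset.mem_image]
    constructor
    · intro hm
      have hmn : m < n := by
        by_contra hmn
        apply hm
        rw [hc]
        simp only [extendSeq]
        rw [dif_neg hmn]
        rfl
      refine ⟨⟨m, hmn⟩, ?_, rfl⟩
      rw [hF, Finset.mem_filter]
      refine ⟨Finset.mem_univ _, ?_⟩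
      intro h0
      apply hm
      rw [hc]
      simp only [extendSeq]
      rw [dif_pos hmn, h0]
      rfl
    · rintro ⟨i, hi, rfl⟩
      rw [hF, Finset.mem_filter] at hi
      rw [hc]
      simp only [extendSeq]
      rw [dif_pos i.isLt]
      simp only [Fin.eta]
      intro h0
      exact hi.2 (le_antisymm (Int.toNat_eq_zero.1 h0) (part2 i))
  have hScard : S.card = n - Zw.card := by
    rw [hS, Finset.card_image_of_injective _ Fin.val_injective, ← part3, hF]
  have hsumZ : ∑ i : Fin n, hatSeq μ ν w i = (N : ℤ) := by
    unfold hatSeq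
    rw [Finset.sum_sub_distrib]
    have hre : ∑ i : Fin n, ((ν (w⁻¹ i) : ℤ) + deltaSeq n (w⁻¹ i))
        = ∑ i : Fin n, ((ν i : ℤ) + deltaSeq n i) :=
      Equiv.sum_comp w⁻¹ (fun i => (ν i : ℤ) + deltaSeq n i)
    rw [hre, hN, Nat.cast_sum]
    rw [Finset.sum_congr rfl (fun (i : Fin n) _ => Nat.cast_sub (le_of_lt (hlt i)))]
    rw [Finset.sum_add_distrib, Finset.sum_add_distrib, Finset.sum_sub_distrib]
    ring
  have hsum : ∑ m ∈ S, c m = N := by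
    have h1 : ∑ m ∈ S, c m = ∑ i ∈ F, (hatSeq μ ν w i).toNat := by
      rw [hS, Finset.sum_image (fun x _ y _ hxy => Fin.val_injective hxy)]
      refine Finset.sum_congr rfl fun i _ => ?_
      rw [hc]
      simp only [extendSeq]
      rw [dif_pos i.isLt]
    have h2 : ∑ i ∈ F, (hatSeq μ ν w i).toNat = ∑ i : Fin n, (hatSeq μ ν w i).toNat := by
      refine Finset.sum_subset (Finset.subset_univ F) fun i _ hi => ?_
      rw [hF, Finset.mem_filter] at hi
      have : hatSeq μ ν w i = 0 := by
        by_contra hne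
        exact hi ⟨Finset.mem_univ _, hne⟩
      rw [this]
      rfl
    rw [h1, h2]
    have h3 : ((∑ i : Fin n, (hatSeq μ ν w i).toNat : ℕ) : ℤ) = (N : ℤ) := by
      rw [Nat.cast_sum]
      rw [Finset.sum_congr rfl (fun (i : Fin n) _ => Int.toNat_of_nonneg (part2 i))]
      exact hsumZ
    exact_mod_cast h3
  rw [HookAux.kostka_hook hcS hsum hk, hScard]
end

section
/- Suppose μ/ν is a skew shape padded to length n with μ_i = ν_i for some i ∈ [n], and let μ̂, ν̂ denote μ and ν with their i-th components removed (length n-1 sequences). Then for every w' ∈ S_{{1,...,i-1}} × S_{{i+1,...,n}}, the multiset of entries of μ + δ^n - w'(ν + δ^n) equals the multiset of entries of μ̂ + δ^{n-1} - (c_i w' c_i^{-1})(ν̂ + δ^{n-1}), where c_i = (n, n-1, ..., i) in cycle notation and δ^m = (m-1,...,1,0). In particular K_{θ, μ+δ^n-w'(ν+δ^n)} = K_{θ, μ̂+δ^{n-1}-(c_i w' c_i^{-1})(ν̂+δ^{n-1})} for all partitions θ. -/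
open Equiv

/-!
The entry of `μ + δ - w'(ν + δ)` at the fixed point `i` is `μ_i - ν_i = 0`, and the remaining
entries are those of `μ̂ + δ - ŵ(ν̂ + δ)`. A zero entry of the content can be deleted without
changing the Kostka number: relabelling the entries of a tableau along the increasing bijection
`ℕ → ℕ ∖ {i}` is a bijection between the two sets of tableaux.
-/

namespace Nat

def succAbove (i m : ℕ) : ℕ := if m < i then m else m + 1

theorem succAbove_strictMono (i : ℕ) : StrictMono (succAbove i) := by
  intro a b hab
  unfold succAbove
  split_ifs <;> omega

theorem range_succAbove (i : ℕ) : Set.range (succAbove i) = {i}ᶜ := by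
  ext m
  simp only [Set.mem_range, Set.mem_compl_singleton_iff, succAbove]
  constructor
  · rintro ⟨k, rfl⟩
    split_ifs <;> omega
  · intro hm
    rcases Nat.lt_or_gt_of_ne hm with h | h
    · exact ⟨m, if_pos h⟩
    · exact ⟨m - 1, by rw [if_neg (by omega)]; omega⟩

end Nat

section Tableaux

variable {shape : ℕ → ℕ} {T : ℕ → ℕ → ℕ}

def cellsWithEntry (shape : ℕ → ℕ) (T : ℕ → ℕ → ℕ) (m : ℕ) : Set (ℕ × ℕ) :=
  {p | p.2 < shape p.1 ∧ T p.1 p.2 = m}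

def relabel (shape : ℕ → ℕ) (g : ℕ → ℕ) (T : ℕ → ℕ → ℕ) : ℕ → ℕ → ℕ :=
  fun r j => if j < shape r then g (T r j) else 0

theorem kostka_eq_ncard (shape : ℕ → ℕ) (c : ℕ → ℕ) :
    kostka shape c =
      {T | IsSSYT shape T ∧ ∀ m, (cellsWithEntry shape T m).ncard = c m}.ncard :=
  rfl

theorem IsSSYT.lt_of_lt (hs : Antitone shape) (hT : IsSSYT shape T) {r₁ r₂ j : ℕ}
    (hr : r₁ < r₂) (hj : j < shape r₂) : T r₁ j < T r₂ j := by
  induction r₂, hr using Nat.le_induction with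
  | base => exact hT.2.1 r₁ j hj
  | succ r _ ih => exact (ih (hj.trans_le (hs r.le_succ))).trans (hT.2.1 r j hj)

theorem IsSSYT.cellsWithEntry_finite (hs : Antitone shape) (hT : IsSSYT shape T) (m : ℕ) :
    (cellsWithEntry shape T m).Finite := by
  refine Set.Finite.of_finite_image (f := Prod.snd) ((Set.finite_Iio (shape 0)).subset ?_) ?_
  · rintro _ ⟨⟨r, j⟩, ⟨hj, -⟩, rfl⟩
    exact hj.trans_le (hs r.zero_le)
  · rintro ⟨r₁, j⟩ ⟨hj₁, he₁⟩ ⟨r₂, j'⟩ ⟨hj₂, he₂⟩ (rfl : j = j')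
    simp only at hj₁ hj₂ he₁ he₂
    rcases lt_trichotomy r₁ r₂ with h | rfl | h
    · exact absurd (hT.lt_of_lt hs h hj₂) (by omega)
    · rfl
    · exact absurd (hT.lt_of_lt hs h hj₁) (by omega)

theorem isSSYT_relabel_iff (hs : Antitone shape) {g : ℕ → ℕ} (hg : StrictMono g)
    (hT : ∀ r j, shape r ≤ j → T r j = 0) : IsSSYT shape (relabel shape g T) ↔ IsSSYT shape T := by
  have inside : ∀ {r j}, j < shape r → relabel shape g T r j = g (T r j) := fun h => if_pos h
  refine ⟨fun ⟨hrow, hcol, _⟩ => ⟨fun r j hj => ?_, fun r j hj => ?_, hT⟩,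
    fun ⟨hrow, hcol, _⟩ => ⟨fun r j hj => ?_, fun r j hj => ?_, fun r j hj => if_neg (by omega)⟩⟩
  · simpa [inside hj, inside (lt_of_le_of_lt j.le_succ hj), hg.le_iff_le] using hrow r j hj
  · simpa [inside hj, inside (hj.trans_le (hs r.le_succ)), hg.lt_iff_lt] using hcol r j hj
  · simpa [inside hj, inside (lt_of_le_of_lt j.le_succ hj), hg.le_iff_le] using hrow r j hj
  · simpa [inside hj, inside (hj.trans_le (hs r.le_succ)), hg.lt_iff_lt] using hcol r j hj

theorem cellsWithEntry_relabel_apply {g : ℕ → ℕ} (hg : g.Injective) (k : ℕ) :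
    cellsWithEntry shape (relabel shape g T) (g k) = cellsWithEntry shape T k := by
  ext ⟨r, j⟩
  simp only [cellsWithEntry, relabel]
  exact and_congr_right fun hj => by rw [if_pos hj, hg.eq_iff]

theorem cellsWithEntry_relabel_of_notMem_range {g : ℕ → ℕ} {m : ℕ} (hm : m ∉ Set.range g) :
    cellsWithEntry shape (relabel shape g T) m = ∅ := by
  refine Set.eq_empty_of_forall_notMem fun ⟨r, j⟩ ⟨hj, he⟩ => hm ⟨T r j, ?_⟩
  simpa [relabel, hj] using he

theorem relabel_injOn {g : ℕ → ℕ} (hg : g.Injective) :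
    Set.InjOn (relabel shape g) {T | ∀ r j, shape r ≤ j → T r j = 0} := by
  intro T hT U hU he
  funext r j
  by_cases hj : j < shape r
  · simpa [relabel, hj, hg.eq_iff] using congrFun (congrFun he r) j
  · rw [hT r j (by omega), hU r j (by omega)]

/-- Entries outside the range of `g` have multiplicity `0`, so a tableau of content `c` is the
relabelling by `g` of a unique tableau of content `c ∘ g`. -/
theorem kostka_comp_strictMono (hs : Antitone shape) {g : ℕ → ℕ} (hg : StrictMono g) {c : ℕ → ℕ}
    (hc : ∀ m ∉ Set.range g, c m = 0) : kostka shape (c ∘ g) = kostka shape c := by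
  rw [kostka_eq_ncard, kostka_eq_ncard,
    ← ((relabel_injOn hg.injective).mono fun T hT => hT.1.2.2).ncard_image]
  congr 1
  ext T
  constructor
  · rintro ⟨U, ⟨hU, hcU⟩, rfl⟩
    refine ⟨(isSSYT_relabel_iff hs hg hU.2.2).2 hU, fun m => ?_⟩
    by_cases hm : m ∈ Set.range g
    · obtain ⟨k, rfl⟩ := hm
      rw [cellsWithEntry_relabel_apply hg.injective, hcU]; rfl
    · rw [cellsWithEntry_relabel_of_notMem_range hm, hc m hm, Set.ncard_empty]
  · rintro ⟨hT, hcT⟩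
    have hrange : ∀ r j, j < shape r → T r j ∈ Set.range g := by
      intro r j hj
      by_contra hm
      have hempty := (Set.ncard_eq_zero (hT.cellsWithEntry_finite hs _)).1
        ((hcT (T r j)).trans (hc _ hm))
      exact Set.eq_empty_iff_forall_notMem.1 hempty (r, j) ⟨hj, rfl⟩
    set U := relabel shape (Function.invFun g) T
    have hTU : relabel shape g U = T := by
      funext r j
      by_cases hj : j < shape r
      · simp only [U, relabel, if_pos hj]
        exact Function.invFun_eq (hrange r j hj)
      · simp only [relabel, if_neg hj]
        exact (hT.2.2 r j (by omega)).symm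
    have hU0 : ∀ r j, shape r ≤ j → U r j = 0 := fun r j hj => if_neg (by omega)
    refine ⟨U, ⟨(isSSYT_relabel_iff hs hg hU0).1 (hTU ▸ hT), fun k => ?_⟩, hTU⟩
    rw [← cellsWithEntry_relabel_apply hg.injective, hTU, hcT]; rfl

theorem kostkaZ_comp_strictMono (hs : Antitone shape) {g : ℕ → ℕ} (hg : StrictMono g) {c : ℕ → ℤ}
    (hc : ∀ m ∉ Set.range g, c m = 0) : kostkaZ shape (c ∘ g) = kostkaZ shape c := by
  have hnonneg : (∀ m, 0 ≤ (c ∘ g) m) ↔ ∀ m, 0 ≤ c m :=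
    ⟨fun h m => (em (m ∈ Set.range g)).elim (fun ⟨k, hk⟩ => hk ▸ h k) fun hm => (hc m hm).ge,
      fun h m => h _⟩
  unfold kostkaZ
  by_cases h : ∀ m, 0 ≤ c m
  · rw [if_pos (hnonneg.2 h), if_pos h]
    exact kostka_comp_strictMono hs hg (c := fun m => (c m).toNat) fun m hm => by simp [hc m hm]
  · rw [if_neg (mt hnonneg.1 h), if_neg h]

end Tableaux

theorem Fin.val_succAbove_eq_natSuccAbove {n : ℕ} (i : Fin (n + 1)) (k : Fin n) :
    (i.succAbove k : ℕ) = Nat.succAbove i k := by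
  unfold Fin.succAbove Nat.succAbove
  split_ifs <;> simp_all [Fin.lt_def]

theorem Fin.univ_val_map_eq_cons_succAbove {α : Type*} {n : ℕ} (f : Fin (n + 1) → α)
    (i : Fin (n + 1)) : Finset.univ.val.map f = f i ::ₘ Finset.univ.val.map (f ∘ i.succAbove) := by
  rw [Fin.univ_succAbove n i, Finset.cons_val, Multiset.map_cons, Finset.map_val,
    Multiset.map_map, Fin.coe_succAboveEmb]

theorem extendSeq_val {n : ℕ} (a : Fin n → ℤ) (k : Fin n) : extendSeq a k = a k :=
  dif_pos k.isLt

theorem extendSeq_comp_succAbove {n : ℕ} (a : Fin (n + 1) → ℤ) (i : Fin (n + 1)) :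
    extendSeq a ∘ Nat.succAbove i = extendSeq (a ∘ i.succAbove) := by
  funext m
  by_cases hm : m < n
  · rw [Function.comp_apply, ← Fin.val_succAbove_eq_natSuccAbove i ⟨m, hm⟩, extendSeq_val]
    exact (extendSeq_val (a ∘ i.succAbove) ⟨m, hm⟩).symm
  · have := i.isLt
    simp only [Function.comp_apply, extendSeq, dif_neg hm, Nat.succAbove]
    exact dif_neg (by split_ifs <;> omega)

theorem deltaSeq_succAbove {n : ℕ} (i : Fin (n + 1)) (k : Fin n) :
    deltaSeq (n + 1) (i.succAbove k) = deltaSeq n k + if i.succAbove k < i then 1 else 0 := by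
  simp only [deltaSeq, Fin.lt_def, Fin.val_succAbove_eq_natSuccAbove, Nat.succAbove]
  split_ifs <;> push_cast <;> omega

theorem hatSeq_apply_eq_zero {n : ℕ} {μ ν : Fin n → ℕ} {w : Perm (Fin n)} {i : Fin n}
    (hw : w i = i) (hi : μ i = ν i) : hatSeq μ ν w i = 0 := by
  rw [hatSeq, Perm.inv_eq_iff_eq.2 hw.symm, hi, sub_self]

/-- Removing a fixed point `i` shifts `δ` by one on both sides exactly below `i`; since `w`
preserves the positions below `i`, the two shifts cancel. -/
theorem hatSeq_succAbove {n : ℕ} (μ ν : Fin (n + 1) → ℕ) {w : Perm (Fin (n + 1))}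
    {v : Perm (Fin n)} {i : Fin (n + 1)} (hwv : ∀ k, i.succAbove (v k) = w (i.succAbove k))
    (hw : ∀ x, w x < i ↔ x < i) (k : Fin n) :
    hatSeq μ ν w (i.succAbove k) =
      hatSeq (fun j => μ (i.succAbove j)) (fun j => ν (i.succAbove j)) v k := by
  have hinv : w⁻¹ (i.succAbove k) = i.succAbove (v⁻¹ k) := by
    rw [Perm.inv_eq_iff_eq, ← hwv, Perm.coe_inv, v.apply_symm_apply]
  have hlt : i.succAbove (v⁻¹ k) < i ↔ i.succAbove k < i := by
    rw [← hinv, ← hw, Perm.coe_inv, w.apply_symm_apply]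
  simp only [hatSeq, hinv, deltaSeq_succAbove, hlt]
  ring

theorem stmt11_general {n : ℕ} (μ ν : Fin (n + 1) → ℕ) (i : Fin (n + 1)) (hi : μ i = ν i)
    (w' : Perm (Fin (n + 1))) (hw1 : ∀ k, k < i → w' k < i) (hw2 : w' i = i)
    (what : Perm (Fin n))
    (hwhat : ∀ k : Fin n, i.succAbove (what k) = w' (i.succAbove k)) :
    (Finset.univ.val.map (hatSeq μ ν w') =
      (0 : ℤ) ::ₘ Finset.univ.val.map
        (hatSeq (fun j => μ (i.succAbove j)) (fun j => ν (i.succAbove j)) what)) ∧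
    ∀ shape : ℕ → ℕ, Antitone shape →
      kostkaZ shape (extendSeq (hatSeq μ ν w')) =
        kostkaZ shape (extendSeq
          (hatSeq (fun j => μ (i.succAbove j)) (fun j => ν (i.succAbove j)) what)) := by
  have hw : ∀ x, w' x < i ↔ x < i := fun x =>
    ⟨fun h => by simpa using Perm.perm_symm_on_of_perm_on_finite (p := (· < i)) hw1 h, hw1 x⟩
  have hzero : hatSeq μ ν w' i = 0 := hatSeq_apply_eq_zero hw2 hi
  have hrest : hatSeq μ ν w' ∘ i.succAbove =
      hatSeq (fun j => μ (i.succAbove j)) (fun j => ν (i.succAbove j)) what :=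
    funext (hatSeq_succAbove μ ν hwhat hw)
  refine ⟨by rw [Fin.univ_val_map_eq_cons_succAbove _ i, hzero, hrest], fun shape hs => ?_⟩
  rw [← hrest, ← extendSeq_comp_succAbove]
  refine (kostkaZ_comp_strictMono hs (Nat.succAbove_strictMono i) fun m hm => ?_).symm
  rw [Nat.range_succAbove, Set.mem_compl_singleton_iff, not_not] at hm
  rw [hm, extendSeq_val, hzero]

/-- key step of Proposition A.2: if `μ_i = ν_i`, then for any
`w'` in the Young subgroup fixing `i` and preserving `{0,...,i-1}`, the multiset
of entries of `μ + δ - w'(ν + δ)` is the multiset of entries of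
`μ̂ + δ - ŵ(ν̂ + δ)` together with an extra `0`, where `μ̂, ν̂` are obtained by
deleting the `i`-th rows and `ŵ = c_i w' c_i⁻¹` is the induced permutation.
In particular the corresponding Kostka numbers agree for every partition. -/
theorem stmt11 {n : ℕ} (μ ν : Fin (n + 1) → ℕ) (hμ : Antitone μ) (hν : Antitone ν)
    (hle : ∀ j, ν j ≤ μ j) (i : Fin (n + 1)) (hi : μ i = ν i)
    (w' : Perm (Fin (n + 1))) (hw1 : ∀ k, k < i → w' k < i) (hw2 : w' i = i)
    (what : Perm (Fin n))
    (hwhat : ∀ k : Fin n, i.succAbove (what k) = w' (i.succAbove k)) :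
    (Finset.univ.val.map (hatSeq μ ν w') =
      (0 : ℤ) ::ₘ Finset.univ.val.map
        (hatSeq (fun j => μ (i.succAbove j)) (fun j => ν (i.succAbove j)) what)) ∧
    ∀ shape : ℕ → ℕ, Antitone shape →
      kostkaZ shape (extendSeq (hatSeq μ ν w')) =
        kostkaZ shape (extendSeq
          (hatSeq (fun j => μ (i.succAbove j)) (fun j => ν (i.succAbove j)) what)) :=
  stmt11_general μ ν i hi w' hw1 hw2 what hwhat
end
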